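/- Let G be a graph whose vertices are sign vectors on a finite set E_m with all components nonzero, where two vertices T and S are adjacent if and only if T⁺ ∪ S⁺ = E_m (T⁺ denotes the set of coordinates where T is +). If C is a cycle in G of odd length, then the vertex set of C is a committee: for every e ∈ E_m, strictly more than half of the vertices of C have a + in coordinate e. -/

import Mathlib

/-- Sign vectors with no zero components on `Fin m`, encoded as Boolean vectors
(`true` is `+`, `false` is `-`). -/
abbrev SV (m : ℕ) := Fin m → Bool

/-- The positive part of a sign vector. -/
def posPartSV {m : ℕ} (X : SV m) : Finset (Fin m) :=
  Finset.univ.filter (fun e => X e = true)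

/-- The separation set of two sign vectors (no zero components). -/
def sep {m : ℕ} (X Y : SV m) : Finset (Fin m) :=
  Finset.univ.filter (fun e => X e ≠ Y e)

/-- A finite set of sign vectors is a committee if for every coordinate `e`,
strictly more than half of its elements have a `+` at `e`. -/
def isCommitteeB {m : ℕ} (K : Finset (SV m)) : Prop :=
  ∀ e : Fin m, (K.card : ℚ) / 2 < ((K.filter (fun X => X e = true)).card : ℚ)

/-- The elements of a family whose positive parts are inclusion-maximal. -/
def maxPlus {m : ℕ} (V : Finset (SV m)) : Finset (SV m) :=
  V.filter (fun X => ∀ Y ∈ V, ¬ posPartSV X ⊂ posPartSV Y)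

/-!
Along an odd cycle every `-` at a coordinate `e` is followed by a `+` at `e`, since adjacent
vertices cover `E_m` with their positive parts. Shifting indices by one therefore injects the
vertices with a `-` at `e` into those with a `+` at `e`, and as the cycle has odd length the
`+` side is strictly larger.
-/

open Finset

lemma card_filter_not_le_card_filter_of_injective {α : Type*} [Fintype α] {p : α → Prop}
    [DecidablePred p] {f : α → α} (hf : Function.Injective f) (h : ∀ a, ¬ p a → p (f a)) :
    #{a | ¬ p a} ≤ #{a | p a} :=
  card_le_card_of_injOn f (fun a ha => by simpa using h a (by simpa using ha)) hf.injOn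

lemma card_lt_two_mul_card_filter_of_injective {α : Type*} [Fintype α] {p : α → Prop}
    [DecidablePred p] (hodd : Odd (Fintype.card α)) {f : α → α} (hf : Function.Injective f)
    (h : ∀ a, ¬ p a → p (f a)) :
    Fintype.card α < 2 * #{a | p a} := by
  have hle := card_filter_not_le_card_filter_of_injective hf h
  have hsum : #{a | p a} + #{a | ¬ p a} = Fintype.card α :=
    card_filter_add_card_filter_not p
  obtain ⟨r, hr⟩ := hodd
  omega

lemma eq_true_of_posPartSV_union_eq_univ {m : ℕ} {X Y : SV m}
    (h : posPartSV X ∪ posPartSV Y = univ) (e : Fin m) (hX : X e ≠ true) : Y e = true := by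
  have he : e ∈ posPartSV X ∪ posPartSV Y := h ▸ mem_univ e
  simp only [posPartSV, mem_union, mem_filter, mem_univ, true_and] at he
  exact he.resolve_left hX

lemma isCommitteeB_image_iff {m : ℕ} {ι : Type*} [Fintype ι] {v : ι → SV m}
    (hv : Function.Injective v) :
    isCommitteeB (univ.image v) ↔
      ∀ e, Fintype.card ι < 2 * #{i | v i e = true} := by
  refine forall_congr' fun e => ?_
  rw [filter_image, card_image_of_injective _ hv, card_image_of_injective _ hv, card_univ,
    div_lt_iff₀ two_pos, mul_comm]
  norm_cast

theorem stmt_4_general {m k : ℕ} (v : Fin (2 * k + 1) → SV m)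
    (hinj : Function.Injective v)
    (hadj : ∀ i : Fin (2 * k + 1),
      posPartSV (v i) ∪ posPartSV (v (i + 1)) = Finset.univ) :
    isCommitteeB (Finset.univ.image v) := by
  rw [isCommitteeB_image_iff hinj]
  intro e
  exact card_lt_two_mul_card_filter_of_injective (by simp) (add_left_injective 1)
    fun i => eq_true_of_posPartSV_union_eq_univ (hadj i) e

theorem stmt_4 {m k : ℕ} (hk : 1 ≤ k) (v : Fin (2 * k + 1) → SV m)
    (hinj : Function.Injective v)
    (hadj : ∀ i : Fin (2 * k + 1),
      posPartSV (v i) ∪ posPartSV (v (i + 1)) = Finset.univ) :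
    isCommitteeB (Finset.univ.image v) :=
  stmt_4_general v hinj hadj
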